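/- For every integer n ≥ 1, substituting Q_n = 0 (and leaving all other variables unchanged) in the polynomial (D_n ∘ D_{n−1} ∘ ⋯ ∘ D_1)(S_n) yields the tridiagonal determinant O_n; that is, the generating polynomial of the quantum relations of the periodic flag manifold specializes at Q_n = 0 to the generating polynomial of the conserved quantities of the open Toda lattice. -/
import Mathlib


open MvPolynomial

/-- Index type for the variables `X_0, …, X_{n-1}` (as `some (Sum.inl i)`),
`Q_0, …, Q_{n-1}` (as `some (Sum.inr i)`) and `μ` (as `none`). -/
abbrev TodaIdx (n : ℕ) := Option (Fin n ⊕ Fin n)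

/-- The polynomial ring `R = ℂ[X_1,…,X_n,Q_1,…,Q_n,μ]` (indices written `0,…,n-1`). -/
abbrev TodaR (n : ℕ) := MvPolynomial (TodaIdx n) ℂ

/-- The variable `X_i`. -/
noncomputable def Xv {n : ℕ} (i : Fin n) : TodaR n := X (some (Sum.inl i))

/-- The variable `Q_i`. -/
noncomputable def Qv {n : ℕ} (i : Fin n) : TodaR n := X (some (Sum.inr i))

/-- The variable `μ`. -/
noncomputable def muv {n : ℕ} : TodaR n := X none

/-- Cyclic successor on indices: `i + 1` read modulo `n`. -/
def finSucc {n : ℕ} (i : Fin n) : Fin n := ⟨((i : ℕ) + 1) % n, Nat.mod_lt _ i.pos⟩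

/-- The differential operator `D_i = Id + Q_i ∂²/(∂X_i ∂X_{i+1})`,
indices read modulo `n`. -/
noncomputable def Dop {n : ℕ} (i : Fin n) (F : TodaR n) : TodaR n :=
  F + Qv i * pderiv (some (Sum.inl i)) (pderiv (some (Sum.inl (finSucc i))) F)

/-- The differential operator `δ_i = Id - Q_i ∂²/(∂X_i ∂X_{i+1})`. -/
noncomputable def dop {n : ℕ} (i : Fin n) (F : TodaR n) : TodaR n :=
  F - Qv i * pderiv (some (Sum.inl i)) (pderiv (some (Sum.inl (finSucc i))) F)

/-- The determinant `O_{[a,b]}` of the tridiagonal matrix with diagonal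
`X_a+μ, …, X_b+μ`, superdiagonal `Q_a, …, Q_{b-1}` and subdiagonal entries `-1`. -/
noncomputable def OI (n a b : ℕ) (hb : b < n) : TodaR n :=
  Matrix.det (Matrix.of fun i j : Fin (b + 1 - a) =>
    if (i : ℕ) = j then Xv ⟨a + i, by have := i.isLt; omega⟩ + muv
    else if (i : ℕ) + 1 = j then Qv ⟨a + i, by have := i.isLt; omega⟩
    else if (j : ℕ) + 1 = i then -1 else 0)

/-- The determinant `O_k` of the `k×k` tridiagonal matrix with diagonal
`X_0+μ, …, X_{k-1}+μ`, superdiagonal `Q_0, …, Q_{k-2}` and subdiagonal entries `-1`;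
`O_0 = 1`. -/
noncomputable def Omat (n k : ℕ) (h : k ≤ n) : TodaR n :=
  Matrix.det (Matrix.of fun i j : Fin k =>
    if (i : ℕ) = j then Xv ⟨i, by have := i.isLt; omega⟩ + muv
    else if (i : ℕ) + 1 = j then Qv ⟨i, by have := i.isLt; omega⟩
    else if (j : ℕ) + 1 = i then -1 else 0)

/-- `S_n = ∏ (X_i + μ)`. -/
noncomputable def Sn (n : ℕ) : TodaR n := ∏ i : Fin n, (Xv i + muv)

/-- The composite `D_{m-1} ∘ ⋯ ∘ D_1 ∘ D_0` (applied with `D_0` first). -/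
noncomputable def DfoldUpTo (n m : ℕ) (h : m ≤ n) (F : TodaR n) : TodaR n :=
  ((List.finRange m).map (Fin.castLE h)).foldl (fun acc i => Dop i acc) F

/-- The periodic Toda matrix `𝓛_n` over the Laurent polynomials in `z` with
coefficients in `R`: tridiagonal as in `Omat n n`, with corner entries
`(𝓛_n)_{0,n-1} = -z` and `(𝓛_n)_{n-1,0} = Q_{n-1} z⁻¹`. -/
noncomputable def Lmat (n : ℕ) (hn : 3 ≤ n) :
    Matrix (Fin n) (Fin n) (LaurentPolynomial (TodaR n)) :=
  Matrix.of fun i j =>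
    if (i : ℕ) = 0 ∧ (j : ℕ) = n - 1 then -(LaurentPolynomial.T 1)
    else if (i : ℕ) = n - 1 ∧ (j : ℕ) = 0 then
      LaurentPolynomial.C (Qv ⟨n - 1, by omega⟩) * LaurentPolynomial.T (-1)
    else if (i : ℕ) = j then LaurentPolynomial.C (Xv i + muv)
    else if (i : ℕ) + 1 = j then LaurentPolynomial.C (Qv i)
    else if (j : ℕ) + 1 = i then -1 else 0

section TodaProofAux

variable {n : ℕ}

/-- `X_k + μ`, with junk value `0` when `k ≥ n`. -/
noncomputable def XV (n k : ℕ) : TodaR n := if h : k < n then Xv ⟨k, h⟩ + muv else 0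

/-- `Q_k`, with junk value `0` when `k ≥ n`. -/
noncomputable def QV (n k : ℕ) : TodaR n := if h : k < n then Qv ⟨k, h⟩ else 0

/-- Recursive form of the tridiagonal determinants. -/
noncomputable def Orec (n : ℕ) : ℕ → TodaR n
  | 0 => 1
  | 1 => XV n 0
  | (k+2) => XV n (k+1) * Orec n (k+1) + QV n k * Orec n k

/-- Tail product `∏_{i=m}^{n-1} (X_i + μ)`. -/
noncomputable def Tprod (n m : ℕ) : TodaR n := ∏ i ∈ Finset.Ico m n, XV n i

/-- Correction term appearing in the main induction. -/
noncomputable def Qterm (n : ℕ) : ℕ → TodaR n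
  | 0 => 0
  | (m+1) => QV n m * Orec n m * Tprod n (m+2)

lemma pderiv_XV_ne (j : Fin n) {k : ℕ} (h : (j : ℕ) ≠ k) :
    pderiv (some (Sum.inl j)) (XV n k) = 0 := by
  unfold XV
  split
  · rw [Xv, muv, map_add, pderiv_X_of_ne, pderiv_X_of_ne (by simp), add_zero]
    simp only [ne_eq, Option.some.injEq, Sum.inl.injEq, Fin.ext_iff]
    omega
  · simp

lemma pderiv_XV_self' (j : Fin n) (k : ℕ) (h : (j : ℕ) = k) :
    pderiv (some (Sum.inl j)) (XV n k) = 1 := by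
  subst h
  unfold XV
  rw [dif_pos j.isLt]
  have hj : (⟨(j : ℕ), j.isLt⟩ : Fin n) = j := rfl
  rw [hj, Xv, muv, map_add, pderiv_X_self, pderiv_X_of_ne (by simp), add_zero]

lemma pderiv_QV (j : Fin n) (k : ℕ) :
    pderiv (some (Sum.inl j)) (QV n k) = 0 := by
  unfold QV
  split
  · rw [Qv, pderiv_X_of_ne (by simp)]
  · simp

lemma pderiv_Orec (j : Fin n) : ∀ m, m ≤ (j : ℕ) →
    pderiv (some (Sum.inl j)) (Orec n m) = 0 := by
  intro m
  induction m using Nat.strong_induction_on with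
  | _ m ih =>
    intro hm
    match m with
    | 0 => simp [Orec]
    | 1 => exact pderiv_XV_ne j (by omega)
    | (k+2) =>
      rw [show Orec n (k+2) = XV n (k+1) * Orec n (k+1) + QV n k * Orec n k from rfl,
        map_add, pderiv_mul, pderiv_mul, pderiv_XV_ne j (by omega), pderiv_QV,
        ih (k+1) (by omega) (by omega), ih k (by omega) (by omega)]
      ring

lemma pderiv_prod_zero (v : TodaIdx n) (s : Finset ℕ) (f : ℕ → TodaR n)
    (h : ∀ i ∈ s, pderiv v (f i) = 0) : pderiv v (∏ i ∈ s, f i) = 0 := by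
  classical
  induction s using Finset.cons_induction with
  | empty => simp
  | cons a s ha ih =>
    rw [Finset.prod_cons, pderiv_mul, h a (Finset.mem_cons_self a s),
      ih (fun i hi => h i (Finset.mem_cons_of_mem hi)), zero_mul, mul_zero, add_zero]

lemma pderiv_Tprod_lt (j : Fin n) {m : ℕ} (h : (j : ℕ) < m) :
    pderiv (some (Sum.inl j)) (Tprod n m) = 0 :=
  pderiv_prod_zero _ _ _ (fun i hi =>
    pderiv_XV_ne j (by rw [Finset.mem_Ico] at hi; omega))

lemma Tprod_succ {m : ℕ} (h : m < n) : Tprod n m = XV n m * Tprod n (m+1) :=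
  Finset.prod_eq_prod_Ico_succ_bot h _

lemma Tprod_top {m : ℕ} (h : n ≤ m) : Tprod n m = 1 := by
  unfold Tprod
  rw [Finset.Ico_eq_empty (by omega), Finset.prod_empty]

lemma Sn_eq_Tprod : Sn n = Tprod n 0 := by
  unfold Sn
  have h1 : ∀ i : Fin n, Xv i + muv = XV n (i : ℕ) := fun i => by
    rw [XV, dif_pos i.isLt]
  rw [Finset.prod_congr rfl (fun i _ => h1 i),
    Fin.prod_univ_eq_prod_range (fun i => XV n i) n, Finset.range_eq_Ico]
  rfl

lemma DfoldUpTo_succ (m : ℕ) (h : m + 1 ≤ n) (h' : m ≤ n) (F : TodaR n) :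
    DfoldUpTo n (m+1) h F = Dop ⟨m, h⟩ (DfoldUpTo n m h' F) := by
  unfold DfoldUpTo
  rw [List.finRange_succ_last, List.map_append, List.foldl_append, List.map_map]
  have h1 : (Fin.castLE h) ∘ Fin.castSucc = Fin.castLE h' := by
    funext i; rfl
  rw [h1]
  rfl

end TodaProofAux

section TodaProofMain

variable {n : ℕ}

lemma Dfold_eq : ∀ (m : ℕ), m + 1 ≤ n → ∀ (h' : m ≤ n),
    DfoldUpTo n m h' (Sn n) = Orec n m * Tprod n m + Qterm n m := by
  intro m
  induction m with
  | zero =>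
    intro _ h'
    simp only [DfoldUpTo, List.finRange_zero, List.map_nil, List.foldl_nil]
    rw [Sn_eq_Tprod, show Qterm n 0 = 0 from rfl, show Orec n 0 = 1 from rfl,
      one_mul, add_zero]
  | succ p ih =>
    intro h h'
    have hp : p < n := by omega
    have hp1 : p + 1 < n := by omega
    rw [DfoldUpTo_succ p h' (by omega), ih (by omega) (by omega)]
    unfold Dop
    rw [show finSucc (⟨p, h'⟩ : Fin n) = ⟨p+1, hp1⟩ from
      Fin.ext (Nat.mod_eq_of_lt hp1)]
    rw [show (Qv (⟨p, h'⟩ : Fin n) : TodaR n) = QV n p from by rw [QV, dif_pos (show p < n from h')]]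
    have dOp : ∀ (j : Fin n), p ≤ (j : ℕ) →
        pderiv (some (Sum.inl j)) (Orec n p) = 0 := fun j hj => pderiv_Orec j p hj
    have dT2a : pderiv (some (Sum.inl (⟨p, h'⟩ : Fin n))) (Tprod n (p+2)) = 0 :=
      pderiv_Tprod_lt _ (show p < p + 2 by omega)
    have dT2b : pderiv (some (Sum.inl (⟨p+1, hp1⟩ : Fin n))) (Tprod n (p+2)) = 0 :=
      pderiv_Tprod_lt _ (show p + 1 < p + 2 by omega)
    have dXa1 : pderiv (some (Sum.inl (⟨p, h'⟩ : Fin n))) (XV n p) = 1 :=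
      pderiv_XV_self' _ _ rfl
    have dXa0 : pderiv (some (Sum.inl (⟨p, h'⟩ : Fin n))) (XV n (p+1)) = 0 :=
      pderiv_XV_ne _ (show p ≠ p + 1 by omega)
    have dXb0 : pderiv (some (Sum.inl (⟨p+1, hp1⟩ : Fin n))) (XV n p) = 0 :=
      pderiv_XV_ne _ (show p + 1 ≠ p by omega)
    have dXb1 : pderiv (some (Sum.inl (⟨p+1, hp1⟩ : Fin n))) (XV n (p+1)) = 1 :=
      pderiv_XV_self' _ _ rfl
    have dOa : pderiv (some (Sum.inl (⟨p, h'⟩ : Fin n))) (Orec n p) = 0 :=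
      dOp _ le_rfl
    have dOb : pderiv (some (Sum.inl (⟨p+1, hp1⟩ : Fin n))) (Orec n p) = 0 :=
      dOp _ (show p ≤ p + 1 by omega)
    cases p with
    | zero =>
      rw [show Qterm n 0 = 0 from rfl, show Qterm n 1 = QV n 0 * Orec n 0 * Tprod n 2 from rfl]
      rw [Tprod_succ hp, Tprod_succ hp1]
      simp only [zero_add, Nat.reduceAdd] at *
      simp only [map_add, pderiv_mul, dT2a, dT2b, dXa1, dXa0, dXb0, dXb1, dOa, dOb,
        mul_zero, zero_mul, add_zero, zero_add, mul_one, one_mul, map_zero]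
      rw [show Orec n 1 = XV n 0 from rfl, show Orec n 0 = 1 from rfl]
      ring
    | succ q =>
      have dQa : pderiv (some (Sum.inl (⟨q+1, h'⟩ : Fin n))) (QV n q) = 0 := pderiv_QV _ _
      have dQb : pderiv (some (Sum.inl (⟨q+2, hp1⟩ : Fin n))) (QV n q) = 0 := pderiv_QV _ _
      have dOqa : pderiv (some (Sum.inl (⟨q+1, h'⟩ : Fin n))) (Orec n q) = 0 :=
        pderiv_Orec _ q (show q ≤ q + 1 by omega)
      have dOqb : pderiv (some (Sum.inl (⟨q+2, hp1⟩ : Fin n))) (Orec n q) = 0 :=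
        pderiv_Orec _ q (show q ≤ q + 2 by omega)
      rw [show Qterm n (q+1) = QV n q * Orec n q * Tprod n (q+2) from rfl,
        show Qterm n (q+2) = QV n (q+1) * Orec n (q+1) * Tprod n (q+3) from rfl]
      rw [Tprod_succ hp, Tprod_succ hp1]
      simp only [show q+1+1 = q+2 from rfl, show q+1+2 = q+3 from rfl] at *
      simp only [map_add, pderiv_mul, dT2a, dT2b, dXa1, dXa0, dXb0, dXb1, dOa, dOb,
        dQa, dQb, dOqa, dOqb, mul_zero, zero_mul, add_zero, zero_add, mul_one, one_mul]
      rw [show Orec n (q+2) = XV n (q+1) * Orec n (q+1) + QV n q * Orec n q from rfl]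
      ring

end TodaProofMain

section TodaDet

variable {n : ℕ}

/-- Proof-free version of the tridiagonal matrix. -/
noncomputable def Mmat (n k : ℕ) : Matrix (Fin k) (Fin k) (TodaR n) :=
  Matrix.of fun i j =>
    if (i : ℕ) = j then XV n i
    else if (i : ℕ) + 1 = j then QV n i
    else if (j : ℕ) + 1 = i then -1 else 0

lemma Mmat_det : ∀ k, (Mmat n k).det = Orec n k := by
  intro k
  induction k using Nat.strong_induction_on with
  | _ k ih =>
    match k with
    | 0 => simp [Mmat, Matrix.det_fin_zero, Orec]
    | 1 => simp [Mmat, Matrix.det_fin_one, Orec]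
    | (k+2) =>
      rw [Matrix.det_succ_row (Mmat n ((k+1)+1)) (Fin.last (k+1))]
      have hkne : (Fin.last k).castSucc ≠ Fin.last (k+1) := by
        simp only [ne_eq, Fin.ext_iff, Fin.coe_castSucc, Fin.val_last]
        omega
      rw [Fintype.sum_eq_add ((Fin.last k).castSucc) (Fin.last (k+1)) hkne ?hz]
      case hz =>
        intro x ⟨hx1, hx2⟩
        have hx1' : (x : ℕ) ≠ k := by
          intro e; exact hx1 (Fin.ext (by simp [e]))
        have hx2' : (x : ℕ) ≠ k + 1 := by
          intro e; exact hx2 (Fin.ext (by simp [e]))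
        have e0 : Mmat n ((k+1)+1) (Fin.last (k+1)) x = 0 := by
          simp only [Mmat, Matrix.of_apply, Fin.val_last]
          rw [if_neg (by omega), if_neg (by have := x.isLt; omega), if_neg (by omega)]
        rw [e0, mul_zero, zero_mul]
      -- the diagonal term
      have elast : Mmat n ((k+1)+1) (Fin.last (k+1)) (Fin.last (k+1)) = XV n (k+1) := by
        simp only [Mmat, Matrix.of_apply, Fin.val_last]
        norm_num
      have subdiag : (Mmat n ((k+1)+1)).submatrix (Fin.last (k+1)).succAbove
          (Fin.last (k+1)).succAbove = Mmat n (k+1) := by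
        ext i j
        simp only [Matrix.submatrix_apply, Fin.succAbove_last, Mmat, Matrix.of_apply,
          Fin.coe_castSucc]
      have signlast : ((-1 : TodaR n)) ^ ((Fin.last (k+1) : ℕ) + (Fin.last (k+1) : ℕ)) = 1 :=
        Even.neg_one_pow ⟨k+1, by simp only [Fin.val_last]⟩
      -- the subdiagonal entry
      have esub : Mmat n ((k+1)+1) (Fin.last (k+1)) ((Fin.last k).castSucc) = -1 := by
        simp only [Mmat, Matrix.of_apply, Fin.val_last, Fin.coe_castSucc]
        norm_num
        exact fun h => absurd h (by omega)
      have signsub : ((-1 : TodaR n)) ^ ((Fin.last (k+1) : ℕ) +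
          (((Fin.last k).castSucc : Fin (k+2)) : ℕ)) = -1 :=
        Odd.neg_one_pow ⟨k, by simp only [Fin.val_last, Fin.coe_castSucc]; ring⟩
      -- the mixed minor
      have hsA : ∀ j : Fin (k+1),
          ((((Fin.last k).castSucc : Fin (k+2)).succAbove j) : ℕ) =
            if (j : ℕ) < k then (j : ℕ) else (j : ℕ) + 1 := by
        intro j
        rw [Fin.succAbove]
        split_ifs with h1 h2 h3 <;>
          simp_all [Fin.lt_def, Fin.coe_castSucc, Fin.val_last]
      have hcol : ((((Fin.last k).castSucc : Fin (k+2)).succAbove (Fin.last k)) : ℕ) = k + 1 := by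
        rw [hsA]; simp
      have hcol2 : ∀ j : Fin k,
          ((((Fin.last k).castSucc : Fin (k+2)).succAbove j.castSucc) : ℕ) = (j : ℕ) := by
        intro j; rw [hsA]; simp [j.isLt]
      set B := (Mmat n ((k+1)+1)).submatrix (Fin.last (k+1)).succAbove
          ((Fin.last k).castSucc : Fin (k+2)).succAbove with hB
      have detB : B.det = QV n k * Orec n k := by
        rw [Matrix.det_succ_column B (Fin.last k)]
        rw [Fintype.sum_eq_single (Fin.last k) ?hz2]
        case hz2 =>
          intro x hx
          have hx' : (x : ℕ) ≠ k := by
            intro e; exact hx (Fin.ext (by simp [e]))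
          have e0 : B x (Fin.last k) = 0 := by
            simp only [hB, Matrix.submatrix_apply, Fin.succAbove_last, Mmat,
              Matrix.of_apply, hcol, Fin.coe_castSucc]
            rw [if_neg (by have := x.isLt; omega), if_neg (by omega),
              if_neg (by have := x.isLt; omega)]
          rw [e0, mul_zero, zero_mul]
        have eB : B (Fin.last k) (Fin.last k) = QV n k := by
          simp only [hB, Matrix.submatrix_apply, Fin.succAbove_last, Mmat,
            Matrix.of_apply, hcol, Fin.coe_castSucc, Fin.val_last]
          norm_num
        have signB : ((-1 : TodaR n)) ^ ((Fin.last k : ℕ) + (Fin.last k : ℕ)) = 1 :=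
          Even.neg_one_pow ⟨k, by simp only [Fin.val_last]⟩
        have minorB : B.submatrix (Fin.last k).succAbove (Fin.last k).succAbove
            = Mmat n k := by
          ext i j
          simp only [hB, Fin.succAbove_last, Matrix.submatrix_apply, Mmat,
            Matrix.of_apply, hcol2, Fin.coe_castSucc]
        rw [eB, signB, minorB, ih k (by omega), one_mul]
      rw [elast, esub, signlast, signsub, subdiag, ih (k+1) (by omega), detB]
      rw [show Orec n (k+2) = XV n (k+1) * Orec n (k+1) + QV n k * Orec n k from rfl]
      ring

lemma Omat_eq_Mmat (k : ℕ) (h : k ≤ n) : Omat n k h = (Mmat n k).det := by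
  unfold Omat Mmat
  congr 1
  ext i j
  have hi : (i : ℕ) < n := lt_of_lt_of_le i.isLt h
  simp only [Matrix.of_apply]
  split_ifs <;> simp [XV, QV, hi]

end TodaDet

section TodaAeval

variable {n : ℕ}

lemma aeval_XV (q : Fin n) (k : ℕ) :
    MvPolynomial.aeval
      (fun v : TodaIdx n => if v = some (Sum.inr q) then 0 else MvPolynomial.X v)
      (XV n k) = XV n k := by
  unfold XV
  split
  · rw [Xv, muv, map_add, aeval_X, aeval_X, if_neg (by simp), if_neg (by simp)]
  · simp

lemma aeval_QV (q : Fin n) {k : ℕ} (hk : k ≠ (q : ℕ)) :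
    MvPolynomial.aeval
      (fun v : TodaIdx n => if v = some (Sum.inr q) then 0 else MvPolynomial.X v)
      (QV n k) = QV n k := by
  unfold QV
  split
  · rw [Qv, aeval_X, if_neg]
    simp only [ne_eq, Option.some.injEq, Sum.inr.injEq, Fin.ext_iff]
    exact hk
  · simp

lemma aeval_Orec (q : Fin n) : ∀ m, m ≤ (q : ℕ) →
    MvPolynomial.aeval
      (fun v : TodaIdx n => if v = some (Sum.inr q) then 0 else MvPolynomial.X v)
      (Orec n m) = Orec n m := by
  intro m
  induction m using Nat.strong_induction_on with
  | _ m ih =>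
    intro hm
    match m with
    | 0 => simp [Orec]
    | 1 => exact aeval_XV q 0
    | (k+2) =>
      rw [show Orec n (k+2) = XV n (k+1) * Orec n (k+1) + QV n k * Orec n k from rfl,
        map_add, map_mul, map_mul, aeval_XV, aeval_QV q (by omega),
        ih (k+1) (by omega) (by omega), ih k (by omega) (by omega)]

lemma aeval_Tprod (q : Fin n) (m : ℕ) :
    MvPolynomial.aeval
      (fun v : TodaIdx n => if v = some (Sum.inr q) then 0 else MvPolynomial.X v)
      (Tprod n m) = Tprod n m := by
  unfold Tprod
  rw [map_prod]
  exact Finset.prod_congr rfl fun i _ => aeval_XV q i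

end TodaAeval

/-- For every `n ≥ 1`, substituting `Q_n = 0` (and fixing every other
variable) in `(D_n ∘ ⋯ ∘ D_1)(S_n)` yields the open Toda determinant `O_n`. -/
theorem Dfold_Sn_at_Qn_zero (n : ℕ) (hn : 1 ≤ n) :
    MvPolynomial.aeval
        (fun v : TodaIdx n =>
          if v = some (Sum.inr (⟨n - 1, by omega⟩ : Fin n)) then 0 else MvPolynomial.X v)
        (DfoldUpTo n n le_rfl (Sn n)) = Omat n n le_rfl := by
  obtain ⟨m, rfl⟩ : ∃ m, n = m + 1 := ⟨n - 1, by omega⟩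
  rw [DfoldUpTo_succ m le_rfl (by omega), Dop, map_add, map_mul]
  have hq0 : MvPolynomial.aeval
      ((fun v : TodaIdx (m+1) =>
        if v = some (Sum.inr (⟨m + 1 - 1, by omega⟩ : Fin (m+1))) then 0
        else MvPolynomial.X v) : TodaIdx (m+1) → TodaR (m+1))
      (Qv (⟨m, Nat.lt_succ_self m⟩ : Fin (m+1))) = 0 := by
    simp [Qv]
  rw [hq0, zero_mul, add_zero, Dfold_eq m le_rfl (by omega),
    Omat_eq_Mmat (m+1) le_rfl, Mmat_det]
  cases m with
  | zero =>
    rw [show Qterm 1 0 = 0 from rfl, add_zero, show Orec 1 0 = 1 from rfl, one_mul,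
      Tprod_succ (show 0 < 1 by omega), Tprod_top (le_refl 1), mul_one, aeval_XV]
    rfl
  | succ k =>
    rw [show Qterm (k+2) (k+1) = QV (k+2) k * Orec (k+2) k * Tprod (k+2) (k+2) from rfl,
      Tprod_top (le_refl (k+2)), mul_one,
      Tprod_succ (show k+1 < k+2 by omega), Tprod_top (le_refl (k+2)), mul_one,
      map_add, map_mul, map_mul, aeval_XV,
      aeval_QV _ (show k ≠ k + 2 - 1 by omega),
      aeval_Orec _ (k+1) (show k + 1 ≤ k + 2 - 1 by omega),
      aeval_Orec _ k (show k ≤ k + 2 - 1 by omega),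
      show Orec (k+2) (k+2) = XV (k+2) (k+1) * Orec (k+2) (k+1) + QV (k+2) k * Orec (k+2) k
        from rfl]
    ring
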